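/- arXiv:1511.04503 — 2 statements merged into one kernel-verified Lean document; each statement's English description precedes it below -/
import Mathlib

section
/- Let (Z,d,ν) be a metric measure space in which ν is a doubling Radon measure, let θ ∈ [0,1] and τ ≥ 1, and fix the parameter R > 0 in both norms. Then there is a constant C ≥ 1, depending on the doubling constant, θ and τ, such that ‖u‖_{A^θ_{1,τ}(Z)} ≤ C ‖u‖_{B^θ_{1,1}(Z)} for every u ∈ L¹(Z,ν) (with the Besov norm taken with parameter 2R). -/
open MeasureTheory Metric Set ENNReal

/-- The Besov energy `∫_0^R ∫_Z ⨍_{B(x,t)} |f(y) − f(x)| dν(y) dν(x) dt/t^{1+θ}`. -/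
noncomputable def besovEnergy {Z : Type*} [MetricSpace Z] [MeasurableSpace Z]
    (ν : Measure Z) (f : Z → ℝ) (θ R : ℝ) : ℝ≥0∞ :=
  ∫⁻ t in Set.Ioo (0 : ℝ) R,
    (∫⁻ x, (ν (ball x t))⁻¹ * ∫⁻ y in ball x t, ENNReal.ofReal |f y - f x| ∂ν ∂ν) *
      ENNReal.ofReal (t ^ (-(1 + θ)))

/-- The Besov norm `‖f‖_{B^θ_{1,1}}` with parameter `R`. -/
noncomputable def besovNorm {Z : Type*} [MetricSpace Z] [MeasurableSpace Z]
    (ν : Measure Z) (f : Z → ℝ) (θ R : ℝ) : ℝ≥0∞ :=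
  (∫⁻ z, ENNReal.ofReal |f z| ∂ν) + besovEnergy ν f θ R

/-- A collection of balls (recorded as center-radius pairs) is admissible for the
fractional John–Nirenberg norm with dilation `τ` and parameter `R` if it is countable,
radii are positive and at most `R/τ`, and the `τ`-inflated balls are pairwise disjoint. -/
def jnAdmissible {Z : Type*} [MetricSpace Z] (τ R : ℝ) (𝓑 : Set (Z × ℝ)) : Prop :=
  𝓑.Countable ∧ (∀ b ∈ 𝓑, 0 < b.2 ∧ b.2 ≤ R / τ) ∧
    𝓑.Pairwise fun b₁ b₂ => Disjoint (ball b₁.1 (τ * b₁.2)) (ball b₂.1 (τ * b₂.2))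

/-- The fractional John–Nirenberg norm `‖u‖_{A^θ_{1,τ}}` with parameter `R`. -/
noncomputable def jnNorm {Z : Type*} [MetricSpace Z] [MeasurableSpace Z]
    (ν : Measure Z) (u : Z → ℝ) (θ τ R : ℝ) : ℝ≥0∞ :=
  (∫⁻ z, ENNReal.ofReal |u z| ∂ν) +
    ⨆ (𝓑 : Set (Z × ℝ)) (_ : jnAdmissible τ R 𝓑),
      ∑' b : 𝓑, ENNReal.ofReal ((b : Z × ℝ).2 ^ (-θ)) *
        ∫⁻ y in ball (b : Z × ℝ).1 (τ * (b : Z × ℝ).2),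
          ENNReal.ofReal |u y - ⨍ w in ball (b : Z × ℝ).1 (τ * (b : Z × ℝ).2), u w ∂ν| ∂ν

/-! For a ball `B(x₀, r)` of an admissible family put `s = τ r`. For every `x`, the oscillation
`∫_{B(x₀,s)} |u - u_{B(x₀,s)}|` is at most `2 ∫_{B(x₀,s)} |u(y) - u(x)| dν(y)`. If moreover
`x ∈ B(x₀, s/2)` and `t ∈ (3s/2, 2s)`, then `B(x, t)` contains `B(x₀, s)` and, by doubling, has
measure at most `D² ν(B(x₀, s))`. Averaging over such `x` and `t` bounds `r^{-θ}` times the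
oscillation by a constant times the part of the Besov energy living on
`(3s/2, 2s) × B(x₀, s/2)`, where `2s ≤ 2R`. The balls `B(x₀, s/2)` are pairwise disjoint, so
these parts add up to at most the whole Besov energy with parameter `2R`. -/

section Lintegral

variable {α β ι : Type*} [MeasurableSpace α] [MeasurableSpace β] {μ : Measure α}

theorem tsum_lintegral_le_lintegral_tsum (f : ι → α → ℝ≥0∞) :
    ∑' i, ∫⁻ a, f i a ∂μ ≤ ∫⁻ a, ∑' i, f i a ∂μ := by
  classical
  rw [ENNReal.tsum_eq_iSup_sum]
  refine iSup_le fun F => le_trans ?_ (lintegral_mono fun a => ENNReal.sum_le_tsum F)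
  induction F using Finset.induction with
  | empty => simp
  | insert i F hi ih =>
    simp only [Finset.sum_insert hi]
    exact (add_le_add le_rfl ih).trans (le_lintegral_add _ _)

theorem tsum_setLIntegral_mul_setLIntegral_le {ν : Measure β} {t : Set ι} (ht : t.Countable)
    {J : ι → Set α} {J₀ : Set α} (hJ : ∀ i ∈ t, J i ⊆ J₀) {S : ι → Set β}
    (hS : ∀ i ∈ t, MeasurableSet (S i)) (hd : t.PairwiseDisjoint S)
    (G : α → β → ℝ≥0∞) (w : α → ℝ≥0∞) :
    ∑' i : t, ∫⁻ a in J i, (∫⁻ b in S i, G a b ∂ν) * w a ∂μ ≤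
      ∫⁻ a in J₀, (∫⁻ b, G a b ∂ν) * w a ∂μ :=
  calc ∑' i : t, ∫⁻ a in J i, (∫⁻ b in S i, G a b ∂ν) * w a ∂μ
      ≤ ∑' i : t, ∫⁻ a in J₀, (∫⁻ b in S i, G a b ∂ν) * w a ∂μ :=
        ENNReal.tsum_le_tsum fun i => lintegral_mono_set (hJ i i.2)
    _ ≤ ∫⁻ a in J₀, ∑' i : t, (∫⁻ b in S i, G a b ∂ν) * w a ∂μ :=
        tsum_lintegral_le_lintegral_tsum _
    _ ≤ ∫⁻ a in J₀, (∫⁻ b, G a b ∂ν) * w a ∂μ := lintegral_mono fun a => by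
        rw [ENNReal.tsum_mul_right, ← lintegral_biUnion ht hS hd]
        exact mul_le_mul_left (setLIntegral_le_lintegral _ _) _

end Lintegral

section Average

variable {α : Type*} [MeasurableSpace α] {μ : Measure α} {u : α → ℝ} {s : Set α}

theorem ofReal_abs_sub_setAverage_mul_le (hs : μ s ≠ ⊤) (hu : IntegrableOn u s μ) (x : α) :
    ENNReal.ofReal |u x - ⨍ y in s, u y ∂μ| * μ s ≤ ∫⁻ y in s, ENNReal.ofReal |u y - u x| ∂μ := by
  have hconst : IntegrableOn (fun _ => u x) s μ := integrableOn_const hs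
  have hmean : ∫ y in s, (u x - u y) ∂μ = μ.real s * (u x - ⨍ y in s, u y ∂μ) := by
    rw [integral_sub hconst hu, setIntegral_const, ← measure_smul_setAverage _ hs,
      smul_eq_mul, smul_eq_mul, mul_sub]
  calc ENNReal.ofReal |u x - ⨍ y in s, u y ∂μ| * μ s
      = ‖∫ y in s, (u x - u y) ∂μ‖ₑ := by
        rw [hmean, enorm_mul, Real.enorm_of_nonneg measureReal_nonneg, Real.enorm_eq_ofReal_abs,
          ofReal_measureReal hs, mul_comm]
    _ ≤ ∫⁻ y in s, ‖u x - u y‖ₑ ∂μ := enorm_integral_le_lintegral_enorm _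
    _ = ∫⁻ y in s, ENNReal.ofReal |u y - u x| ∂μ := by
        simp only [Real.enorm_eq_ofReal_abs, abs_sub_comm]

theorem setLIntegral_abs_sub_setAverage_le (hs : μ s ≠ ⊤) (hu : IntegrableOn u s μ) (x : α) :
    ∫⁻ y in s, ENNReal.ofReal |u y - ⨍ z in s, u z ∂μ| ∂μ ≤
      2 * ∫⁻ y in s, ENNReal.ofReal |u y - u x| ∂μ :=
  calc ∫⁻ y in s, ENNReal.ofReal |u y - ⨍ z in s, u z ∂μ| ∂μ
      ≤ ∫⁻ y in s, (ENNReal.ofReal |u y - u x| + ENNReal.ofReal |u x - ⨍ z in s, u z ∂μ|) ∂μ :=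
        lintegral_mono fun y =>
          (ENNReal.ofReal_le_ofReal (abs_sub_le _ _ _)).trans ENNReal.ofReal_add_le
    _ = ∫⁻ y in s, ENNReal.ofReal |u y - u x| ∂μ +
          ENNReal.ofReal |u x - ⨍ z in s, u z ∂μ| * μ s := by
        rw [lintegral_add_right _ measurable_const, setLIntegral_const]
    _ ≤ 2 * ∫⁻ y in s, ENNReal.ofReal |u y - u x| ∂μ := by
        rw [two_mul]
        exact add_le_add le_rfl (ofReal_abs_sub_setAverage_mul_le hs hu x)

end Average

/-- With `s = τ r`, the last factor bounds `∫_{3s/2}^{2s} t^{-(1+θ)} dt` from below. -/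
theorem rpow_neg_eq_four_mul_rpow_mul_rpow_neg_one_add {τ r : ℝ} (θ : ℝ) (hτ : 0 < τ)
    (hr : 0 < r) :
    r ^ (-θ) = 4 * (2 * τ) ^ θ * ((2 * (τ * r)) ^ (-(1 + θ)) * (τ * r / 2)) := by
  have h2τ : 0 < 2 * τ := by positivity
  rw [neg_add, Real.rpow_add (by positivity), Real.rpow_neg_one, ← mul_assoc 2 τ r,
    Real.mul_rpow h2τ.le hr.le, Real.rpow_neg h2τ.le]
  field_simp
  ring

section Doubling

variable {Z : Type*} [PseudoMetricSpace Z] [MeasurableSpace Z]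

def IsDoublingWith (ν : Measure Z) (D : ℝ≥0∞) : Prop :=
  ∀ (z : Z) (r : ℝ), 0 < r →
    ν (ball z (2 * r)) ≤ D * ν (ball z r) ∧ 0 < ν (ball z r) ∧ ν (ball z r) < ⊤

noncomputable def ballMeanDiff (ν : Measure Z) (f : Z → ℝ) (t : ℝ) (x : Z) : ℝ≥0∞ :=
  (ν (ball x t))⁻¹ * ∫⁻ y in ball x t, ENNReal.ofReal |f y - f x| ∂ν

variable {ν : Measure Z} {D : ℝ≥0∞} {u : Z → ℝ} {x₀ : Z} {s θ : ℝ}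

theorem IsDoublingWith.measure_ball_four_mul_le (h : IsDoublingWith ν D) (z : Z) {r : ℝ}
    (hr : 0 < r) : ν (ball z (4 * r)) ≤ D ^ 2 * ν (ball z r) :=
  calc ν (ball z (4 * r)) = ν (ball z (2 * (2 * r))) := by ring_nf
    _ ≤ D * ν (ball z (2 * r)) := (h z (2 * r) (by positivity)).1
    _ ≤ D * (D * ν (ball z r)) := by gcongr; exact (h z r hr).1
    _ = D ^ 2 * ν (ball z r) := by ring

/-- For `x ∈ B(x₀, s/2)` and `t ∈ [3s/2, 2s]` we have `B(x₀, s) ⊆ B(x, t) ⊆ B(x₀, 4s)`. -/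
theorem setLIntegral_abs_sub_setAverage_le_ballMeanDiff (h : IsDoublingWith ν D)
    (hu : Integrable u ν) (hs : 0 < s) {t : ℝ} (ht : 3 * s / 2 ≤ t) (ht' : t ≤ 2 * s) {x : Z}
    (hx : x ∈ ball x₀ (s / 2)) :
    ∫⁻ y in ball x₀ s, ENNReal.ofReal |u y - ⨍ z in ball x₀ s, u z ∂ν| ∂ν ≤
      2 * D ^ 2 * ν (ball x₀ s) * ballMeanDiff ν u t x := by
  rw [mem_ball] at hx
  have hsub : ball x₀ s ⊆ ball x t := ball_subset_ball' (by rw [dist_comm]; linarith)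
  have hsup : ball x t ⊆ ball x₀ (4 * s) := ball_subset_ball' (by linarith)
  obtain ⟨-, hpos, hfin⟩ := h x t (by linarith)
  calc ∫⁻ y in ball x₀ s, ENNReal.ofReal |u y - ⨍ z in ball x₀ s, u z ∂ν| ∂ν
      ≤ 2 * ∫⁻ y in ball x₀ s, ENNReal.ofReal |u y - u x| ∂ν :=
        setLIntegral_abs_sub_setAverage_le (h x₀ s hs).2.2.ne hu.integrableOn x
    _ ≤ 2 * ∫⁻ y in ball x t, ENNReal.ofReal |u y - u x| ∂ν := by
        gcongr
    _ = 2 * (ν (ball x t) * ballMeanDiff ν u t x) := by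
        rw [ballMeanDiff, ENNReal.mul_inv_cancel_left hpos.ne' hfin.ne]
    _ ≤ 2 * (D ^ 2 * ν (ball x₀ s) * ballMeanDiff ν u t x) := by
        gcongr
        exact (measure_mono hsup).trans (h.measure_ball_four_mul_le x₀ hs)
    _ = 2 * D ^ 2 * ν (ball x₀ s) * ballMeanDiff ν u t x := by ring

variable [OpensMeasurableSpace Z]

theorem setLIntegral_abs_sub_setAverage_le_setLIntegral_ballMeanDiff (h : IsDoublingWith ν D)
    (hD : D ≠ ⊤) (hu : Integrable u ν) (hs : 0 < s) {t : ℝ} (ht : 3 * s / 2 ≤ t)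
    (ht' : t ≤ 2 * s) :
    ∫⁻ y in ball x₀ s, ENNReal.ofReal |u y - ⨍ z in ball x₀ s, u z ∂ν| ∂ν ≤
      2 * D ^ 3 * ∫⁻ x in ball x₀ (s / 2), ballMeanDiff ν u t x ∂ν := by
  obtain ⟨hdbl, hpos, hfin⟩ := h x₀ (s / 2) (by positivity)
  rw [mul_div_cancel₀ s two_ne_zero] at hdbl
  have hBfin : ν (ball x₀ s) ≠ ⊤ := (h x₀ s hs).2.2.ne
  rw [← ENNReal.mul_le_mul_iff_left hpos.ne' hfin.ne]
  calc (∫⁻ y in ball x₀ s, ENNReal.ofReal |u y - ⨍ z in ball x₀ s, u z ∂ν| ∂ν) * ν (ball x₀ (s / 2))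
      = ∫⁻ _ in ball x₀ (s / 2),
          ∫⁻ y in ball x₀ s, ENNReal.ofReal |u y - ⨍ z in ball x₀ s, u z ∂ν| ∂ν ∂ν :=
        (setLIntegral_const _ _).symm
    _ ≤ ∫⁻ x in ball x₀ (s / 2), 2 * D ^ 2 * ν (ball x₀ s) * ballMeanDiff ν u t x ∂ν :=
        setLIntegral_mono' measurableSet_ball fun x hx =>
          setLIntegral_abs_sub_setAverage_le_ballMeanDiff h hu hs ht ht' hx
    _ = 2 * D ^ 2 * ν (ball x₀ s) * ∫⁻ x in ball x₀ (s / 2), ballMeanDiff ν u t x ∂ν :=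
        lintegral_const_mul' _ _ (by finiteness)
    _ ≤ 2 * D ^ 2 * (D * ν (ball x₀ (s / 2))) *
          ∫⁻ x in ball x₀ (s / 2), ballMeanDiff ν u t x ∂ν := by gcongr
    _ = 2 * D ^ 3 * (∫⁻ x in ball x₀ (s / 2), ballMeanDiff ν u t x ∂ν) *
          ν (ball x₀ (s / 2)) := by ring

theorem ofReal_mul_setLIntegral_abs_sub_setAverage_le (h : IsDoublingWith ν D) (hD : D ≠ ⊤)
    (hu : Integrable u ν) (hθ : -1 ≤ θ) (hs : 0 < s) :
    ENNReal.ofReal ((2 * s) ^ (-(1 + θ)) * (s / 2)) *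
        ∫⁻ y in ball x₀ s, ENNReal.ofReal |u y - ⨍ z in ball x₀ s, u z ∂ν| ∂ν ≤
      2 * D ^ 3 * ∫⁻ t in Ioo (3 * s / 2) (2 * s),
        (∫⁻ x in ball x₀ (s / 2), ballMeanDiff ν u t x ∂ν) * ENNReal.ofReal (t ^ (-(1 + θ))) := by
  set osc := ∫⁻ y in ball x₀ s, ENNReal.ofReal |u y - ⨍ z in ball x₀ s, u z ∂ν| ∂ν
  calc ENNReal.ofReal ((2 * s) ^ (-(1 + θ)) * (s / 2)) * osc
      = ∫⁻ _ in Ioo (3 * s / 2) (2 * s), osc * ENNReal.ofReal ((2 * s) ^ (-(1 + θ))) := by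
        rw [setLIntegral_const, Real.volume_Ioo, ENNReal.ofReal_mul (by positivity)]
        ring_nf
    _ ≤ ∫⁻ t in Ioo (3 * s / 2) (2 * s), (2 * D ^ 3 *
          ∫⁻ x in ball x₀ (s / 2), ballMeanDiff ν u t x ∂ν) * ENNReal.ofReal (t ^ (-(1 + θ))) :=
        setLIntegral_mono' measurableSet_Ioo fun t ⟨ht, ht'⟩ => mul_le_mul'
          (setLIntegral_abs_sub_setAverage_le_setLIntegral_ballMeanDiff h hD hu hs ht.le ht'.le)
          (ENNReal.ofReal_le_ofReal <|
            Real.rpow_le_rpow_of_nonpos (by linarith) ht'.le (by linarith))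
    _ = 2 * D ^ 3 * ∫⁻ t in Ioo (3 * s / 2) (2 * s),
          (∫⁻ x in ball x₀ (s / 2), ballMeanDiff ν u t x ∂ν) * ENNReal.ofReal (t ^ (-(1 + θ))) := by
        rw [← lintegral_const_mul' _ _ (by finiteness)]
        simp only [mul_assoc]

theorem rpow_neg_mul_setLIntegral_abs_sub_setAverage_le (h : IsDoublingWith ν D) (hD : D ≠ ⊤)
    (hu : Integrable u ν) (hθ : -1 ≤ θ) {τ r : ℝ} (hτ : 0 < τ) (hr : 0 < r) :
    ENNReal.ofReal (r ^ (-θ)) *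
        ∫⁻ y in ball x₀ (τ * r), ENNReal.ofReal |u y - ⨍ z in ball x₀ (τ * r), u z ∂ν| ∂ν ≤
      8 * ENNReal.ofReal ((2 * τ) ^ θ) * D ^ 3 *
        ∫⁻ t in Ioo (3 * (τ * r) / 2) (2 * (τ * r)),
          (∫⁻ x in ball x₀ (τ * r / 2), ballMeanDiff ν u t x ∂ν) *
            ENNReal.ofReal (t ^ (-(1 + θ))) := by
  set osc := ∫⁻ y in ball x₀ (τ * r), ENNReal.ofReal |u y - ⨍ z in ball x₀ (τ * r), u z ∂ν| ∂ν
  set c := (2 * (τ * r)) ^ (-(1 + θ)) * (τ * r / 2)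
  calc ENNReal.ofReal (r ^ (-θ)) * osc
      = 4 * ENNReal.ofReal ((2 * τ) ^ θ) * (ENNReal.ofReal c * osc) := by
        rw [rpow_neg_eq_four_mul_rpow_mul_rpow_neg_one_add θ hτ hr,
          ENNReal.ofReal_mul (by positivity), ENNReal.ofReal_mul (by norm_num),
          ENNReal.ofReal_ofNat, mul_assoc]
    _ ≤ 4 * ENNReal.ofReal ((2 * τ) ^ θ) * (2 * D ^ 3 *
          ∫⁻ t in Ioo (3 * (τ * r) / 2) (2 * (τ * r)),
            (∫⁻ x in ball x₀ (τ * r / 2), ballMeanDiff ν u t x ∂ν) *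
              ENNReal.ofReal (t ^ (-(1 + θ)))) :=
        mul_le_mul' le_rfl
          (ofReal_mul_setLIntegral_abs_sub_setAverage_le h hD hu hθ (mul_pos hτ hr))
    _ = _ := by ring

end Doubling

theorem tsum_jnAdmissible_le_mul_besovEnergy {Z : Type*} [MetricSpace Z] [MeasurableSpace Z]
    [OpensMeasurableSpace Z] {ν : Measure Z} {D : ℝ≥0∞} (h : IsDoublingWith ν D) (hD : D ≠ ⊤)
    {u : Z → ℝ} (hu : Integrable u ν) {θ τ R : ℝ} (hθ : -1 ≤ θ) (hτ : 0 < τ) {𝓑 : Set (Z × ℝ)}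
    (h𝓑 : jnAdmissible τ R 𝓑) :
    ∑' b : 𝓑, ENNReal.ofReal ((b : Z × ℝ).2 ^ (-θ)) *
        ∫⁻ y in ball (b : Z × ℝ).1 (τ * (b : Z × ℝ).2),
          ENNReal.ofReal |u y - ⨍ w in ball (b : Z × ℝ).1 (τ * (b : Z × ℝ).2), u w ∂ν| ∂ν ≤
      8 * ENNReal.ofReal ((2 * τ) ^ θ) * D ^ 3 * besovEnergy ν u θ (2 * R) := by
  obtain ⟨h𝓑, hrad, hdisj⟩ := h𝓑
  have hτr : ∀ b ∈ 𝓑, 0 < τ * b.2 ∧ τ * b.2 ≤ R := fun b hb =>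
    ⟨mul_pos hτ (hrad b hb).1, (le_div_iff₀' hτ).1 (hrad b hb).2⟩
  have hJ : ∀ b ∈ 𝓑, Ioo (3 * (τ * b.2) / 2) (2 * (τ * b.2)) ⊆ Ioo 0 (2 * R) := fun b hb =>
    Ioo_subset_Ioo (by linarith [hτr b hb]) (by linarith [hτr b hb])
  have hS : 𝓑.PairwiseDisjoint fun b => ball b.1 (τ * b.2 / 2) := fun b hb b' hb' hne =>
    (hdisj hb hb' hne).mono (ball_subset_ball (by linarith [hτr b hb]))
      (ball_subset_ball (by linarith [hτr b' hb']))
  grw [ENNReal.tsum_le_tsum fun b : 𝓑 => rpow_neg_mul_setLIntegral_abs_sub_setAverage_le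
    (x₀ := b.1.1) h hD hu hθ hτ (hrad b b.2).1, ENNReal.tsum_mul_left]
  gcongr
  -- `besovEnergy ν u θ (2 * R)` unfolds to the integral of `ballMeanDiff ν u`
  exact tsum_setLIntegral_mul_setLIntegral_le h𝓑 hJ (fun _ _ => measurableSet_ball) hS _ _

theorem stmt_6_general
    {Z : Type*} [MetricSpace Z] [MeasurableSpace Z] [BorelSpace Z]
    (ν : Measure Z)
    (C_D : ℝ) (hCD : 1 ≤ C_D)
    (hdbl : ∀ (z : Z) (r : ℝ), 0 < r →
      ν (ball z (2 * r)) ≤ ENNReal.ofReal C_D * ν (ball z r) ∧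
        0 < ν (ball z r) ∧ ν (ball z r) < ⊤)
    (θ : ℝ) (hθ0 : 0 ≤ θ)
    (τ : ℝ) (hτ : 1 ≤ τ) (R : ℝ) :
    ∃ C : ℝ≥0∞, 1 ≤ C ∧ C < ⊤ ∧ ∀ u : Z → ℝ, Integrable u ν →
      jnNorm ν u θ τ R ≤ C * besovNorm ν u θ (2 * R) := by
  have hK : 1 ≤ 8 * ENNReal.ofReal ((2 * τ) ^ θ) * ENNReal.ofReal C_D ^ 3 :=
    one_le_mul (one_le_mul (by norm_num)
      (ENNReal.one_le_ofReal.2 (Real.one_le_rpow (by linarith) hθ0)))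
      (one_le_pow₀ (ENNReal.one_le_ofReal.2 hCD))
  refine ⟨_, hK, by finiteness, fun u hu => ?_⟩
  rw [jnNorm, besovNorm, mul_add]
  exact add_le_add (le_mul_of_one_le_left' hK) (iSup₂_le fun _ h𝓑 =>
    tsum_jnAdmissible_le_mul_besovEnergy hdbl ENNReal.ofReal_ne_top hu (by linarith)
      (by linarith) h𝓑)

/-- For `θ ∈ [0,1]`, `τ ≥ 1` and parameter `R > 0`, there is `C ≥ 1`
(depending on the doubling constant, `θ` and `τ`) such that
`‖u‖_{A^θ_{1,τ}(Z)} ≤ C ‖u‖_{B^θ_{1,1}(Z)}` for every `u ∈ L¹(Z,ν)`,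
the Besov norm being taken with parameter `2R`. -/
theorem stmt_6
    {Z : Type*} [MetricSpace Z] [MeasurableSpace Z] [BorelSpace Z]
    (ν : Measure Z) [ν.Regular]
    (C_D : ℝ) (hCD : 1 ≤ C_D)
    (hdbl : ∀ (z : Z) (r : ℝ), 0 < r →
      ν (ball z (2 * r)) ≤ ENNReal.ofReal C_D * ν (ball z r) ∧
        0 < ν (ball z r) ∧ ν (ball z r) < ⊤)
    (θ : ℝ) (hθ0 : 0 ≤ θ) (hθ1 : θ ≤ 1)
    (τ : ℝ) (hτ : 1 ≤ τ) (R : ℝ) (hR : 0 < R) :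
    ∃ C : ℝ≥0∞, 1 ≤ C ∧ C < ⊤ ∧ ∀ u : Z → ℝ, Integrable u ν →
      jnNorm ν u θ τ R ≤ C * besovNorm ν u θ (2 * R) :=
  stmt_6_general ν C_D hCD hdbl θ hθ0 τ hτ R
end

section
/- Let (Z,d,ν) be a bounded metric measure space in which ν is a doubling Radon measure, let 0 ≤ θ < η ≤ 1 and τ ≥ 1, and fix the norm parameters. Then A^η_{1,τ}(Z) ⊂ B^θ_{1,1}(Z); quantitatively, there is a constant C ≥ 1 (depending on the doubling constant, θ, η, τ, diam(Z) and the norm parameters) such that ‖f‖_{B^θ_{1,1}(Z)} ≤ C ‖f‖_{A^η_{1,τ}(Z)} for every f ∈ L¹(Z,ν). -/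
/-!
Split the Besov energy at the scale `t₀ = R_A / (3τ)`. For `t ≥ t₀` doubling makes every ball
`B(x, t)` comparable in measure to `Z`, so the inner average is at most a multiple of
`‖f‖₁ / ν(Z) + |f x|`. For `t < t₀` take a maximal `2τt`-separated net: the balls `B(i, 2τt)`
cover `Z`, and on each of them the average of `|f y - f x|` over `B(x, t)` is controlled by the
oscillation of `f` on `B(i, 3τt)`. Doubling bounds the number of net points in a ball of
radius `6τt`, so the net splits into boundedly many families whose balls `B(i, 3τt)` are pairwise
disjoint, i.e. are `τ`-dilates of admissible balls of radius `3t`; each family costs at most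
`(3t)^η ‖f‖_{A^η}`. Finally `∫₀^{t₀} t^{η - 1 - θ} dt < ∞` because `θ < η`.
-/

open MeasureTheory Metric Set ENNReal

structure IsDoubling {Z : Type*} [MetricSpace Z] [MeasurableSpace Z] (ν : Measure Z) (C : ℝ≥0∞) :
    Prop where
  measure_ball_two_mul_le : ∀ z r, 0 < r → ν (ball z (2 * r)) ≤ C * ν (ball z r)
  measure_ball_pos : ∀ z r, 0 < r → 0 < ν (ball z r)
  measure_ball_lt_top : ∀ z r, 0 < r → ν (ball z r) < ⊤

namespace IsDoubling

variable {Z : Type*} [MetricSpace Z] [MeasurableSpace Z] {ν : Measure Z} {C : ℝ≥0∞}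

lemma measure_ball_le_pow_mul (hν : IsDoubling ν C) (z : Z) {r r' : ℝ} (hr : 0 < r) {k : ℕ}
    (hr' : r' ≤ 2 ^ k * r) : ν (ball z r') ≤ C ^ k * ν (ball z r) := by
  refine (measure_mono (ball_subset_ball hr')).trans ?_
  clear hr'
  induction k with
  | zero => simp
  | succ n ih =>
    calc ν (ball z (2 ^ (n + 1) * r)) = ν (ball z (2 * (2 ^ n * r))) := by ring_nf
      _ ≤ C * ν (ball z (2 ^ n * r)) := hν.measure_ball_two_mul_le z _ (by positivity)
      _ ≤ C * (C ^ n * ν (ball z r)) := by gcongr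
      _ = C ^ (n + 1) * ν (ball z r) := by ring

lemma inv_measure_ball_le (hν : IsDoubling ν C) {x : Z} {r : ℝ} (hr : 0 < r) {k : ℕ}
    {B : Set Z} (hB : B ⊆ ball x (2 ^ k * r)) : (ν (ball x r))⁻¹ ≤ C ^ k * (ν B)⁻¹ := by
  have hpos := hν.measure_ball_pos x r hr
  have hfin := hν.measure_ball_lt_top x r hr
  have hC : C ≠ 0 := by
    rintro rfl
    have h := hν.measure_ball_two_mul_le x r hr
    rw [zero_mul, nonpos_iff_eq_zero] at h
    exact (hν.measure_ball_pos x (2 * r) (by positivity)).ne' h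
  have hBle : ν B ≤ C ^ k * ν (ball x r) :=
    (measure_mono hB).trans (hν.measure_ball_le_pow_mul x hr le_rfl)
  have hBfin : ν B ≠ ⊤ :=
    ne_top_of_le_ne_top (hν.measure_ball_lt_top x _ (by positivity)).ne (measure_mono hB)
  rw [← div_eq_mul_inv, ENNReal.le_div_iff_mul_le (Or.inr (pow_ne_zero k hC)) (Or.inl hBfin)]
  calc (ν (ball x r))⁻¹ * ν B ≤ (ν (ball x r))⁻¹ * (C ^ k * ν (ball x r)) := by gcongr
    _ = C ^ k := by rw [mul_comm (C ^ k), ← mul_assoc, ENNReal.inv_mul_cancel hpos.ne' hfin.ne,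
      one_mul]

/-- Packing bound: the disjoint balls `ball x s` lie in `ball z (L + s)`, whose measure is
at most `C ^ k` times that of each of them. -/
lemma card_le_of_pairwise_le_dist [OpensMeasurableSpace Z] (hν : IsDoubling ν C) {z : Z}
    {L s : ℝ} (hs : 0 < s) (hL : 0 ≤ L) {k : ℕ} (hk : 2 * L + s ≤ 2 ^ k * s) {T : Finset Z}
    (hTz : ∀ x ∈ T, dist x z ≤ L) (hT : (T : Set Z).Pairwise fun a b => 2 * s ≤ dist a b) :
    (T.card : ℝ≥0∞) ≤ C ^ k := by
  set B₀ := ball z (L + s)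
  have hB₀ : ∀ x ∈ T, ν B₀ ≤ C ^ k * ν (ball x s) := fun x hx =>
    hν.measure_ball_le_pow_mul x hs le_rfl |>.trans' <| measure_mono fun w hw => by
      simp only [B₀, mem_ball] at hw ⊢
      linarith [dist_triangle w z x, dist_comm z x, hTz x hx]
  have hdisj : (T : Set Z).PairwiseDisjoint fun x => ball x s := fun a ha b hb hab =>
    ball_disjoint_ball (by linarith [hT ha hb hab])
  have hunion : (⋃ x ∈ T, ball x s) ⊆ B₀ := by
    refine iUnion₂_subset fun x hx w hw => ?_
    simp only [B₀, mem_ball] at hw ⊢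
    linarith [dist_triangle w x z, hTz x hx]
  have hsum : (T.card : ℝ≥0∞) * ν B₀ ≤ C ^ k * ν B₀ :=
    calc (T.card : ℝ≥0∞) * ν B₀ = ∑ _x ∈ T, ν B₀ := by rw [Finset.sum_const, nsmul_eq_mul]
      _ ≤ ∑ x ∈ T, C ^ k * ν (ball x s) := Finset.sum_le_sum hB₀
      _ = C ^ k * ν (⋃ x ∈ T, ball x s) := by
        rw [← Finset.mul_sum, measure_biUnion_finset hdisj fun _ _ => measurableSet_ball]
      _ ≤ C ^ k * ν B₀ := by gcongr
  exact (ENNReal.mul_le_mul_iff_left (hν.measure_ball_pos z _ (by linarith)).ne'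
    (hν.measure_ball_lt_top z _ (by linarith)).ne).1 hsum

lemma finite_of_pairwise_le_dist [OpensMeasurableSpace Z] (hν : IsDoubling ν C) (hC : C ≠ ⊤)
    (hZ : Bornology.IsBounded (univ : Set Z)) {s : ℝ} (hs : 0 < s) {T : Set Z}
    (hT : T.Pairwise fun a b => 2 * s ≤ dist a b) : T.Finite := by
  by_contra hinf
  obtain ⟨z, -⟩ := Set.Infinite.nonempty hinf
  obtain ⟨D, hD⟩ := Metric.isBounded_iff.1 hZ
  have hD0 : 0 ≤ D := dist_self z ▸ hD (mem_univ z) (mem_univ z)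
  obtain ⟨k, hk⟩ := pow_unbounded_of_one_lt ((2 * D + s) / s) one_lt_two
  obtain ⟨n, hn⟩ := ENNReal.exists_nat_gt (pow_ne_top hC : C ^ k ≠ ⊤)
  obtain ⟨U, hUT, hUcard⟩ := Set.Infinite.exists_subset_card_eq hinf n
  have hU := hν.card_le_of_pairwise_le_dist hs hD0 ((div_lt_iff₀ hs).1 hk).le
    (fun x _ => hD (mem_univ x) (mem_univ z)) (hT.mono hUT)
  rw [hUcard] at hU
  exact hn.not_ge hU

end IsDoubling

lemma exists_pairwise_le_dist_forall_exists_dist_lt {X : Type*} [MetricSpace X] {ε : ℝ}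
    (hε : 0 < ε) :
    ∃ T : Set X, T.Pairwise (fun a b => ε ≤ dist a b) ∧ ∀ x, ∃ i ∈ T, dist x i < ε := by
  obtain ⟨T, hT⟩ := zorn_subset {T : Set X | T.Pairwise fun a b => ε ≤ dist a b}
    fun c hc hchain => ⟨⋃₀ c, hchain.pairwise_sUnion.2 hc, fun _ => subset_sUnion_of_mem⟩
  refine ⟨T, hT.prop, fun x => ?_⟩
  by_contra! hx
  have hins : insert x T ∈ {T : Set X | T.Pairwise fun a b => ε ≤ dist a b} :=
    hT.prop.insert fun i hi _ => ⟨hx i hi, dist_comm x i ▸ hx i hi⟩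
  have hxT : x ∈ T := hT.eq_of_subset hins (subset_insert x T) ▸ mem_insert x T
  exact (hx x hxT).not_gt (by rwa [dist_self])

lemma exists_fin_coloring_of_card_filter_le {ι : Type*} [DecidableEq ι] {G : ι → ι → Prop}
    [DecidableRel G] (hG : ∀ i j, G i j → G j i) (M : ℕ) (s : Finset ι)
    (hdeg : ∀ i ∈ s, (s.filter (G i)).card ≤ M) :
    ∃ c : ι → Fin (M + 1), ∀ i ∈ s, ∀ j ∈ s, i ≠ j → G i j → c i ≠ c j := by
  induction s using Finset.induction_on with
  | empty => exact ⟨fun _ => 0, by simp⟩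
  | @insert a s ha ih =>
    have hmono : ∀ i, (s.filter (G i)).card ≤ ((insert a s).filter (G i)).card := fun i =>
      Finset.card_le_card (Finset.filter_subset_filter _ (Finset.subset_insert a s))
    obtain ⟨c, hc⟩ := ih fun i hi => (hmono i).trans (hdeg i (Finset.mem_insert_of_mem hi))
    obtain ⟨k, -, hk⟩ := Finset.exists_mem_notMem_of_card_lt_card
      (s := (s.filter (G a)).image c) (t := Finset.univ) <| by
        rw [Finset.card_univ, Fintype.card_fin, Nat.lt_succ_iff]
        exact Finset.card_image_le.trans
          ((hmono a).trans (hdeg a (Finset.mem_insert_self a s)))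
    have hk' : ∀ j ∈ s, G a j → k ≠ c j := fun j hj hGj h =>
      hk (h ▸ Finset.mem_image_of_mem c (Finset.mem_filter.2 ⟨hj, hGj⟩))
    have hne : ∀ j ∈ s, j ≠ a := fun j hj h => ha (h ▸ hj)
    refine ⟨Function.update c a k, fun i hi j hj hij hGij => ?_⟩
    rcases Finset.mem_insert.1 hi with rfl | hi' <;> rcases Finset.mem_insert.1 hj with rfl | hj'
    · exact absurd rfl hij
    · simpa [Function.update_of_ne (hne j hj')] using hk' j hj' hGij
    · simpa [Function.update_of_ne (hne i hi')] using (hk' i hi' (hG _ _ hGij)).symm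
    · simpa [Function.update_of_ne (hne i hi'), Function.update_of_ne (hne j hj')] using
        hc i hi' j hj' hij hGij

lemma IsDoubling.exists_finset_net {Z : Type*} [MetricSpace Z] [MeasurableSpace Z]
    [OpensMeasurableSpace Z] {ν : Measure Z} {C : ℝ≥0∞} (hν : IsDoubling ν C) (hC : C ≠ ⊤)
    (hZ : Bornology.IsBounded (univ : Set Z)) {s : ℝ} (hs : 0 < s) :
    ∃ T : Finset Z, (T : Set Z).Pairwise (fun a b => 2 * s ≤ dist a b) ∧
      ∀ x, ∃ i ∈ T, dist x i < 2 * s := by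
  obtain ⟨T, hT, hcov⟩ :=
    exists_pairwise_le_dist_forall_exists_dist_lt (X := Z) (ε := 2 * s) (by positivity)
  have hfin := hν.finite_of_pairwise_le_dist hC hZ hs hT
  exact ⟨hfin.toFinset, by rwa [hfin.coe_toFinset], by simpa only [hfin.mem_toFinset] using hcov⟩

section JohnNirenberg

variable {Z : Type*} [MetricSpace Z] [MeasurableSpace Z] {ν : Measure Z} {u : Z → ℝ}
  {θ τ R : ℝ}

variable (ν) in
noncomputable def ballOsc (u : Z → ℝ) (z : Z) (ρ : ℝ) : ℝ≥0∞ :=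
  ∫⁻ y in ball z ρ, ENNReal.ofReal |u y - ⨍ w in ball z ρ, u w ∂ν| ∂ν

variable (ν) in
noncomputable def jnOscSup (u : Z → ℝ) (θ τ R : ℝ) : ℝ≥0∞ :=
  ⨆ (𝓑 : Set (Z × ℝ)) (_ : jnAdmissible τ R 𝓑),
    ∑' b : 𝓑, ENNReal.ofReal ((b : Z × ℝ).2 ^ (-θ)) * ballOsc ν u (b : Z × ℝ).1 (τ * (b : Z × ℝ).2)

lemma jnNorm_eq_add_jnOscSup :
    jnNorm ν u θ τ R = (∫⁻ z, ENNReal.ofReal |u z| ∂ν) + jnOscSup ν u θ τ R := rfl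

lemma sum_ballOsc_le_jnOscSup {T : Finset Z} {r : ℝ} (hr : 0 < r) (hrR : r ≤ R / τ)
    (hT : (T : Set Z).Pairwise fun i j => Disjoint (ball i (τ * r)) (ball j (τ * r))) :
    ∑ i ∈ T, ballOsc ν u i (τ * r) ≤ ENNReal.ofReal (r ^ θ) * jnOscSup ν u θ τ R := by
  classical
  set 𝓑 := T.image fun i => (i, r)
  have hinj : Set.InjOn (fun i : Z => (i, r)) T := fun _ _ _ _ h => (Prod.ext_iff.1 h).1
  have hadm : jnAdmissible τ R (𝓑 : Set (Z × ℝ)) := by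
    refine ⟨𝓑.countable_toSet, ?_, ?_⟩
    · simp only [𝓑, Finset.coe_image, forall_mem_image]
      exact fun _ _ => ⟨hr, hrR⟩
    · simp only [𝓑, Finset.coe_image]
      exact (hinj.pairwise_image).2 hT
  have hsum : ∑ i ∈ T, ENNReal.ofReal (r ^ (-θ)) * ballOsc ν u i (τ * r) ≤ jnOscSup ν u θ τ R := by
    refine le_iSup₂_of_le (𝓑 : Set (Z × ℝ)) hadm (le_of_eq ?_)
    rw [Finset.tsum_subtype' 𝓑 fun b => ENNReal.ofReal (b.2 ^ (-θ)) * ballOsc ν u b.1 (τ * b.2),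
      Finset.sum_image hinj]
  have hone : ENNReal.ofReal (r ^ θ) * ENNReal.ofReal (r ^ (-θ)) = 1 := by
    rw [← ENNReal.ofReal_mul (by positivity), ← Real.rpow_add hr, add_neg_cancel,
      Real.rpow_zero, ENNReal.ofReal_one]
  calc ∑ i ∈ T, ballOsc ν u i (τ * r)
      = ENNReal.ofReal (r ^ θ) * ∑ i ∈ T, ENNReal.ofReal (r ^ (-θ)) * ballOsc ν u i (τ * r) := by
        rw [← Finset.mul_sum, ← mul_assoc, hone, one_mul]
    _ ≤ ENNReal.ofReal (r ^ θ) * jnOscSup ν u θ τ R := by gcongr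

/-- Colour the balls so that each colour class has disjoint `τ`-dilates. -/
lemma sum_ballOsc_le_of_card_filter_le {T : Finset Z} {r : ℝ} (hr : 0 < r) (hrR : r ≤ R / τ)
    {M : ℕ} (hM : ∀ i ∈ T, (T.filter fun j => dist i j < 2 * τ * r).card ≤ M) :
    ∑ i ∈ T, ballOsc ν u i (τ * r) ≤ (M + 1) * ENNReal.ofReal (r ^ θ) * jnOscSup ν u θ τ R := by
  classical
  obtain ⟨c, hc⟩ := exists_fin_coloring_of_card_filter_le
    (G := fun i j => dist i j < 2 * τ * r) (fun i j h => by rwa [dist_comm]) M T hM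
  have hclass : ∀ k, ∑ i ∈ T.filter (fun i => c i = k), ballOsc ν u i (τ * r) ≤
      ENNReal.ofReal (r ^ θ) * jnOscSup ν u θ τ R := fun k =>
    sum_ballOsc_le_jnOscSup hr hrR fun i hi j hj hij => by
      simp only [Finset.coe_filter, mem_ofPred_eq] at hi hj
      refine ball_disjoint_ball ?_
      by_contra! h
      exact hc i hi.1 j hj.1 hij (by linarith) (hi.2.trans hj.2.symm)
  calc ∑ i ∈ T, ballOsc ν u i (τ * r)
      = ∑ k : Fin (M + 1), ∑ i ∈ T.filter (fun i => c i = k), ballOsc ν u i (τ * r) :=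
        (Finset.sum_fiberwise T c _).symm
    _ ≤ ∑ _k : Fin (M + 1), ENNReal.ofReal (r ^ θ) * jnOscSup ν u θ τ R :=
        Finset.sum_le_sum fun k _ => hclass k
    _ = (M + 1) * ENNReal.ofReal (r ^ θ) * jnOscSup ν u θ τ R := by
        rw [Finset.sum_const, Finset.card_univ, Fintype.card_fin, nsmul_eq_mul, mul_assoc]
        push_cast
        rfl

end JohnNirenberg

lemma inv_mul_setLIntegral_abs_sub_le {Z : Type*} [MeasurableSpace Z] {ν : Measure Z}
    {f : Z → ℝ} {A B : Set Z} (hAB : A ⊆ B) {K : ℝ≥0∞}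
    (hK : (ν A)⁻¹ ≤ K * (ν B)⁻¹) (x : Z) (c : ℝ) :
    (ν A)⁻¹ * ∫⁻ y in A, ENNReal.ofReal |f y - f x| ∂ν ≤
      K * (ν B)⁻¹ * ∫⁻ y in B, ENNReal.ofReal |f y - c| ∂ν + ENNReal.ofReal |f x - c| := by
  have htri : ∀ y, ENNReal.ofReal |f y - f x| ≤
      ENNReal.ofReal |f x - c| + ENNReal.ofReal |f y - c| := fun y => by
    rw [← ENNReal.ofReal_add (abs_nonneg _) (abs_nonneg _)]
    exact ENNReal.ofReal_le_ofReal (by linarith [abs_sub_le (f y) c (f x), abs_sub_comm (f x) c])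
  calc (ν A)⁻¹ * ∫⁻ y in A, ENNReal.ofReal |f y - f x| ∂ν
      ≤ (ν A)⁻¹ * ∫⁻ y in A, (ENNReal.ofReal |f x - c| + ENNReal.ofReal |f y - c|) ∂ν := by
        gcongr with y
        exact htri y
    _ ≤ (ν A)⁻¹ * (ENNReal.ofReal |f x - c| * ν A + ∫⁻ y in B, ENNReal.ofReal |f y - c| ∂ν) := by
        rw [lintegral_add_left measurable_const, setLIntegral_const]
        gcongr
    _ = (ν A)⁻¹ * ν A * ENNReal.ofReal |f x - c| +
          (ν A)⁻¹ * ∫⁻ y in B, ENNReal.ofReal |f y - c| ∂ν := by ring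
    _ ≤ 1 * ENNReal.ofReal |f x - c| + K * (ν B)⁻¹ * ∫⁻ y in B, ENNReal.ofReal |f y - c| ∂ν := by
        gcongr
        exact ENNReal.inv_mul_le_one _
    _ = _ := by rw [one_mul, add_comm]

section Besov

variable {Z : Type*} [MetricSpace Z] [MeasurableSpace Z] {ν : Measure Z} {f : Z → ℝ}

variable (ν) in
noncomputable def besovScaleEnergy (f : Z → ℝ) (t : ℝ) : ℝ≥0∞ :=
  ∫⁻ x, (ν (ball x t))⁻¹ * ∫⁻ y in ball x t, ENNReal.ofReal |f y - f x| ∂ν ∂ν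

lemma besovEnergy_eq {θ R : ℝ} : besovEnergy ν f θ R =
    ∫⁻ t in Ioo 0 R, besovScaleEnergy ν f t * ENNReal.ofReal (t ^ (-(1 + θ))) := rfl

lemma setLIntegral_inv_mul_setLIntegral_le {S B : Set Z} (hS : MeasurableSet S) (hSB : S ⊆ B)
    {t : ℝ} {K : ℝ≥0∞} (hK : ∀ x ∈ S, ball x t ⊆ B ∧ (ν (ball x t))⁻¹ ≤ K * (ν B)⁻¹) (c : ℝ) :
    ∫⁻ x in S, (ν (ball x t))⁻¹ * ∫⁻ y in ball x t, ENNReal.ofReal |f y - f x| ∂ν ∂ν ≤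
      (K + 1) * ∫⁻ y in B, ENNReal.ofReal |f y - c| ∂ν := by
  set I := ∫⁻ y in B, ENNReal.ofReal |f y - c| ∂ν
  calc ∫⁻ x in S, (ν (ball x t))⁻¹ * ∫⁻ y in ball x t, ENNReal.ofReal |f y - f x| ∂ν ∂ν
      ≤ ∫⁻ x in S, (K * (ν B)⁻¹ * I + ENNReal.ofReal |f x - c|) ∂ν :=
        setLIntegral_mono' hS fun x hx =>
          inv_mul_setLIntegral_abs_sub_le (hK x hx).1 (hK x hx).2 x c
    _ = K * I * ((ν B)⁻¹ * ν S) + ∫⁻ x in S, ENNReal.ofReal |f x - c| ∂ν := by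
        rw [lintegral_add_left measurable_const, setLIntegral_const]
        ring
    _ ≤ K * I * ((ν B)⁻¹ * ν B) + I := by
        gcongr
        exact lintegral_mono_set hSB
    _ ≤ K * I * 1 + I := by gcongr; exact ENNReal.inv_mul_le_one _
    _ = (K + 1) * I := by ring

lemma IsDoubling.besovScaleEnergy_le_jnOscSup [OpensMeasurableSpace Z] {C : ℝ≥0∞}
    (hν : IsDoubling ν C) (hC : C ≠ ⊤) (hZ : Bornology.IsBounded (univ : Set Z)) {τ : ℝ}
    (hτ : 1 ≤ τ) {k M : ℕ} (hk : τ ≤ 2 ^ k) (hM : C ^ 4 < M) {η R t : ℝ} (ht : 0 < t)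
    (htR : 3 * τ * t ≤ R) :
    besovScaleEnergy ν f t ≤
      (C ^ (k + 3) + 1) * ((M + 1) * ENNReal.ofReal ((3 * t) ^ η) * jnOscSup ν f η τ R) := by
  classical
  set s := τ * t
  have hs : 0 < s := by positivity
  have hts : t ≤ s := le_mul_of_one_le_left ht.le hτ
  obtain ⟨T, hTsep, hTcov⟩ := hν.exists_finset_net hC hZ hs
  have hcover : besovScaleEnergy ν f t ≤ ∑ i ∈ T, ∫⁻ x in ball i (2 * s),
      (ν (ball x t))⁻¹ * ∫⁻ y in ball x t, ENNReal.ofReal |f y - f x| ∂ν ∂ν := by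
    have hunion : (⋃ i : T, ball (i : Z) (2 * s)) = univ :=
      eq_univ_of_forall fun x => by
        obtain ⟨i, hi, hx⟩ := hTcov x
        exact mem_iUnion.2 ⟨⟨i, hi⟩, hx⟩
    rw [besovScaleEnergy, ← setLIntegral_univ, ← hunion, ← Finset.tsum_subtype]
    exact lintegral_iUnion_le _ _
  have hlocal : ∀ i ∈ T, ∫⁻ x in ball i (2 * s),
      (ν (ball x t))⁻¹ * ∫⁻ y in ball x t, ENNReal.ofReal |f y - f x| ∂ν ∂ν ≤
        (C ^ (k + 3) + 1) * ballOsc ν f i (τ * (3 * t)) := by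
    intro i _
    rw [show τ * (3 * t) = 3 * s by ring]
    refine setLIntegral_inv_mul_setLIntegral_le measurableSet_ball
      (ball_subset_ball (by linarith)) (fun x hx => ⟨fun y hy => ?_, hν.inv_measure_ball_le ht
        fun y hy => ?_⟩) _
    · rw [mem_ball] at hx hy ⊢
      linarith [dist_triangle y x i]
    · have h8 : 8 * s ≤ 2 ^ (k + 3) * t := by
        rw [pow_add]
        nlinarith
      rw [mem_ball] at hx hy ⊢
      linarith [dist_triangle y i x, dist_comm x i]
  have hdeg : ∀ i ∈ T, (T.filter fun j => dist i j < 2 * τ * (3 * t)).card ≤ M := by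
    intro i _
    have hcard := hν.card_le_of_pairwise_le_dist (z := i) (L := 6 * s) (k := 4) hs (by positivity)
      (by linarith) (T := T.filter fun j => dist i j < 2 * τ * (3 * t))
      (fun x hx => by
        rw [Finset.mem_filter, dist_comm] at hx
        linarith [hx.2])
      (hTsep.mono (Finset.coe_subset.2 (Finset.filter_subset _ _)))
    exact_mod_cast (hcard.trans_lt hM).le
  calc besovScaleEnergy ν f t
      ≤ ∑ i ∈ T, (C ^ (k + 3) + 1) * ballOsc ν f i (τ * (3 * t)) :=
        hcover.trans (Finset.sum_le_sum hlocal)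
    _ ≤ _ := by
        rw [← Finset.mul_sum]
        gcongr
        exact sum_ballOsc_le_of_card_filter_le (by positivity)
          ((le_div_iff₀ (by positivity)).2 (by linarith)) hdeg

lemma IsDoubling.besovScaleEnergy_le_lintegral {C : ℝ≥0∞} (hν : IsDoubling ν C) {t : ℝ}
    (ht : 0 < t) {m : ℕ} (hm : ∀ x : Z, univ ⊆ ball x (2 ^ m * t)) :
    besovScaleEnergy ν f t ≤ (C ^ m + 1) * ∫⁻ y, ENNReal.ofReal |f y| ∂ν := by
  rw [besovScaleEnergy]
  have h := setLIntegral_inv_mul_setLIntegral_le (ν := ν) (f := f) MeasurableSet.univ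
    subset_rfl (fun x _ => ⟨subset_univ _, hν.inv_measure_ball_le ht (hm x)⟩) 0
  simpa only [Measure.restrict_univ, sub_zero] using h

end Besov

namespace IsDoubling

variable {Z : Type*} [MetricSpace Z] [MeasurableSpace Z] {ν : Measure Z} {C : ℝ≥0∞}

lemma exists_besovScaleEnergy_le_jnOscSup [OpensMeasurableSpace Z] (hν : IsDoubling ν C)
    (hC : C ≠ ⊤) (hZ : Bornology.IsBounded (univ : Set Z)) {τ : ℝ} (hτ : 1 ≤ τ) (η R : ℝ) :
    ∃ K : ℝ≥0∞, K ≠ ⊤ ∧ ∀ (f : Z → ℝ) (t : ℝ), 0 < t → 3 * τ * t ≤ R →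
      besovScaleEnergy ν f t ≤ K * ENNReal.ofReal (t ^ η) * jnOscSup ν f η τ R := by
  obtain ⟨k, hk⟩ := pow_unbounded_of_one_lt τ one_lt_two
  obtain ⟨M, hM⟩ := ENNReal.exists_nat_gt (pow_ne_top hC : C ^ 4 ≠ ⊤)
  refine ⟨(C ^ (k + 3) + 1) * ((M + 1) * ENNReal.ofReal (3 ^ η)), by finiteness,
    fun f t ht htR => ?_⟩
  calc besovScaleEnergy ν f t
      ≤ (C ^ (k + 3) + 1) * ((M + 1) * ENNReal.ofReal ((3 * t) ^ η) * jnOscSup ν f η τ R) :=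
        hν.besovScaleEnergy_le_jnOscSup hC hZ hτ hk.le hM ht htR
    _ = _ := by
        rw [Real.mul_rpow (by norm_num) ht.le, ENNReal.ofReal_mul (by positivity)]
        ring

lemma exists_besovScaleEnergy_le_lintegral (hν : IsDoubling ν C) (hC : C ≠ ⊤)
    (hZ : Bornology.IsBounded (univ : Set Z)) {t₀ : ℝ} (ht₀ : 0 < t₀) :
    ∃ K : ℝ≥0∞, K ≠ ⊤ ∧ ∀ (f : Z → ℝ) (t : ℝ), t₀ ≤ t →
      besovScaleEnergy ν f t ≤ K * ∫⁻ y, ENNReal.ofReal |f y| ∂ν := by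
  obtain ⟨D, hD⟩ := Metric.isBounded_iff.1 hZ
  obtain ⟨m, hm⟩ := pow_unbounded_of_one_lt (D / t₀) one_lt_two
  refine ⟨C ^ m + 1, by finiteness, fun f t ht => hν.besovScaleEnergy_le_lintegral
    (ht₀.trans_le ht) fun x y _ => ?_⟩
  have hDt : D < 2 ^ m * t := ((div_lt_iff₀ ht₀).1 hm).trans_le (by gcongr)
  exact mem_ball.2 ((hD (mem_univ y) (mem_univ x)).trans_lt hDt)

end IsDoubling

lemma exists_setLIntegral_mul_rpow_le {θ η t₀ : ℝ} (hθ : 0 ≤ θ) (hθη : θ < η) (ht₀ : 0 < t₀)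
    (R : ℝ) : ∃ c₁ c₂ : ℝ≥0∞, c₁ ≠ ⊤ ∧ c₂ ≠ ⊤ ∧ ∀ (g : ℝ → ℝ≥0∞) (a b : ℝ≥0∞),
      (∀ t ∈ Ioo 0 t₀, g t ≤ a * ENNReal.ofReal (t ^ η)) → (∀ t, t₀ ≤ t → g t ≤ b) →
      ∫⁻ t in Ioo 0 R, g t * ENNReal.ofReal (t ^ (-(1 + θ))) ≤ a * c₁ + b * c₂ := by
  refine ⟨∫⁻ t in Ioo 0 t₀, ENNReal.ofReal (t ^ (η - (1 + θ))),
    ENNReal.ofReal (t₀ ^ (-(1 + θ))) * volume (Ico t₀ R),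
    (((intervalIntegral.integrableOn_Ioo_rpow_iff ht₀).2 (by linarith)).setLIntegral_lt_top).ne,
    by rw [Real.volume_Ico]; finiteness, fun g a b hsmall hlarge => ?_⟩
  have hsplit : Ioo 0 R ⊆ Ioo 0 t₀ ∪ Ico t₀ R := fun t ht =>
    (lt_or_ge t t₀).imp (fun h => ⟨ht.1, h⟩) fun h => ⟨h, ht.2⟩
  calc ∫⁻ t in Ioo 0 R, g t * ENNReal.ofReal (t ^ (-(1 + θ)))
      ≤ (∫⁻ t in Ioo 0 t₀, g t * ENNReal.ofReal (t ^ (-(1 + θ)))) +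
          ∫⁻ t in Ico t₀ R, g t * ENNReal.ofReal (t ^ (-(1 + θ))) :=
        (lintegral_mono_set hsplit).trans (lintegral_union_le _ _ _)
    _ ≤ (∫⁻ t in Ioo 0 t₀, a * ENNReal.ofReal (t ^ (η - (1 + θ)))) +
          ∫⁻ _t in Ico t₀ R, b * ENNReal.ofReal (t₀ ^ (-(1 + θ))) := by
        gcongr ?_ + ?_
        · refine setLIntegral_mono' measurableSet_Ioo fun t ht => ?_
          calc g t * ENNReal.ofReal (t ^ (-(1 + θ)))
              ≤ a * ENNReal.ofReal (t ^ η) * ENNReal.ofReal (t ^ (-(1 + θ))) := by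
                gcongr; exact hsmall t ht
            _ = a * ENNReal.ofReal (t ^ (η - (1 + θ))) := by
                rw [mul_assoc, ← ENNReal.ofReal_mul (Real.rpow_nonneg ht.1.le _),
                  ← Real.rpow_add ht.1, ← sub_eq_add_neg]
        · exact setLIntegral_mono' measurableSet_Ico fun t ht => mul_le_mul' (hlarge t ht.1)
            (ENNReal.ofReal_le_ofReal (Real.rpow_le_rpow_of_nonpos ht₀ ht.1 (by linarith)))
    _ = a * (∫⁻ t in Ioo 0 t₀, ENNReal.ofReal (t ^ (η - (1 + θ)))) +
          b * (ENNReal.ofReal (t₀ ^ (-(1 + θ))) * volume (Ico t₀ R)) := by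
        rw [lintegral_const_mul _ (by fun_prop), setLIntegral_const, mul_assoc]

theorem stmt_7_general
    {Z : Type*} [MetricSpace Z] [MeasurableSpace Z] [BorelSpace Z]
    (ν : Measure Z)
    (hZbdd : Bornology.IsBounded (Set.univ : Set Z))
    (C_D : ℝ)
    (hdbl : ∀ (z : Z) (r : ℝ), 0 < r →
      ν (ball z (2 * r)) ≤ ENNReal.ofReal C_D * ν (ball z r) ∧
        0 < ν (ball z r) ∧ ν (ball z r) < ⊤)
    (θ η : ℝ) (hθ0 : 0 ≤ θ) (hθη : θ < η)
    (τ : ℝ) (hτ : 1 ≤ τ) (R_B R_A : ℝ) (hRA : 0 < R_A) :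
    ∃ C : ℝ≥0∞, 1 ≤ C ∧ C < ⊤ ∧ ∀ f : Z → ℝ, Integrable f ν →
      besovNorm ν f θ R_B ≤ C * jnNorm ν f η τ R_A := by
  have hν : IsDoubling ν (ENNReal.ofReal C_D) :=
    ⟨fun z r hr => (hdbl z r hr).1, fun z r hr => (hdbl z r hr).2.1,
      fun z r hr => (hdbl z r hr).2.2⟩
  have hτ₀ : 0 < 3 * τ := by positivity
  have ht₀ : 0 < R_A / (3 * τ) := div_pos hRA hτ₀
  obtain ⟨KA, hKA, hsmall⟩ :=
    hν.exists_besovScaleEnergy_le_jnOscSup ENNReal.ofReal_ne_top hZbdd hτ η R_A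
  obtain ⟨KL, hKL, hlarge⟩ :=
    hν.exists_besovScaleEnergy_le_lintegral ENNReal.ofReal_ne_top hZbdd ht₀
  obtain ⟨c₁, c₂, hc₁, hc₂, hint⟩ := exists_setLIntegral_mul_rpow_le hθ0 hθη ht₀ R_B
  refine ⟨1 + KA * c₁ + KL * c₂, le_self_add.trans le_self_add, by finiteness, fun f _ => ?_⟩
  set L := ∫⁻ z, ENNReal.ofReal |f z| ∂ν
  set A := jnOscSup ν f η τ R_A
  have hE : besovEnergy ν f θ R_B ≤ KA * A * c₁ + KL * L * c₂ := by
    rw [besovEnergy_eq]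
    refine hint _ _ _ (fun t ht => ?_) fun t ht => hlarge f t ht
    exact (hsmall f t ht.1 ((lt_div_iff₀' hτ₀).1 ht.2).le).trans_eq (mul_right_comm _ _ _)
  calc besovNorm ν f θ R_B = L + besovEnergy ν f θ R_B := rfl
    _ ≤ (L + A) + (KA * (L + A) * c₁ + KL * (L + A) * c₂) := by
        gcongr
        · exact le_self_add
        · exact hE.trans (by gcongr <;> simp)
    _ = (1 + KA * c₁ + KL * c₂) * jnNorm ν f η τ R_A := by
        rw [jnNorm_eq_add_jnOscSup]
        ring

/-- If `Z` is bounded, `0 ≤ θ < η ≤ 1` and `τ ≥ 1`, then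
`A^η_{1,τ}(Z) ⊂ B^θ_{1,1}(Z)`: there is `C ≥ 1` (depending on the doubling constant,
`θ`, `η`, `τ`, `diam Z` and the norm parameters) with
`‖f‖_{B^θ_{1,1}(Z)} ≤ C ‖f‖_{A^η_{1,τ}(Z)}` for every `f ∈ L¹(Z,ν)`. -/
theorem stmt_7
    {Z : Type*} [MetricSpace Z] [MeasurableSpace Z] [BorelSpace Z]
    (ν : Measure Z) [ν.Regular]
    (hZbdd : Bornology.IsBounded (Set.univ : Set Z))
    (C_D : ℝ) (hCD : 1 ≤ C_D)
    (hdbl : ∀ (z : Z) (r : ℝ), 0 < r →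
      ν (ball z (2 * r)) ≤ ENNReal.ofReal C_D * ν (ball z r) ∧
        0 < ν (ball z r) ∧ ν (ball z r) < ⊤)
    (θ η : ℝ) (hθ0 : 0 ≤ θ) (hθη : θ < η) (hη1 : η ≤ 1)
    (τ : ℝ) (hτ : 1 ≤ τ) (R_B R_A : ℝ) (hRB : 0 < R_B) (hRA : 0 < R_A) :
    ∃ C : ℝ≥0∞, 1 ≤ C ∧ C < ⊤ ∧ ∀ f : Z → ℝ, Integrable f ν →
      besovNorm ν f θ R_B ≤ C * jnNorm ν f η τ R_A :=
  stmt_7_general ν hZbdd C_D hdbl θ η hθ0 hθη τ hτ R_B R_A hRA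
end
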